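/- Let μ_n^J be the laws of the vectors (l(Y_{[nt_1]})/n,...,l(Y_{[nt_j]})/n). Suppose there exist ρ > 0, γ ∈ ℝ, x ∈ ℝ^j, and a strictly increasing sequence of positive integers (n_m) with n_{m+1}/n_m → 1 such that μ_{n_m}^J(B(x,ρ)) ≥ exp(n_m γ) for all m ≥ 1. Then for every δ > ρ, liminf_{n→∞} (1/n) log μ_n^J(B(x,δ)) ≥ γ. -/

import Mathlib

open MeasureTheory Filter
open scoped ENNReal

/-- The free product of `d` copies of `ℤ/2ℤ`; its Cayley graph is the `d`-regular tree. -/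
abbrev FP (d : ℕ) : Type := Monoid.CoprodI (fun _ : Fin d => Multiplicative (ZMod 2))

/-- The generator `a_i`. -/
noncomputable def gen (d : ℕ) (i : Fin d) : FP d :=
  Monoid.CoprodI.of (i := i) (Multiplicative.ofAdd (1 : ZMod 2))

/-- The generating set `S = {a_1, …, a_d}`. -/
def genSet (d : ℕ) : Set (FP d) := Set.range (gen d)

/-- The word length `l(g)` with respect to `S`. -/
noncomputable def wl (d : ℕ) (g : FP d) : ℕ :=
  sInf {n | ∃ L : List (FP d), (∀ x ∈ L, x ∈ genSet d) ∧ L.length = n ∧ L.prod = g}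

open scoped Topology

/-! Each step of the walk changes the word length by at most one, so for `u ≤ v` and `t ∈ [0, 1]`
the rescaled lengths `l(Y_⌊vt⌋)/v` and `l(Y_⌊ut⌋)/u` differ by at most `(2(v - u) + 1)/v`.
Comparing time `n` with the last `n_m ≤ n`, non-lacunarity gives `n_m/n → 1`; hence eventually the
event `B(x, ρ)` at time `n_m` is contained in the event `B(x, δ)` at time `n`, whose probability is
then at least `exp(n_m γ) = exp(n γ (n_m/n))`. -/

lemma exists_list_genSet_prod_eq {d : ℕ} (g : FP d) :
    ∃ L : List (FP d), (∀ s ∈ L, s ∈ genSet d) ∧ L.prod = g := by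
  induction g using Monoid.CoprodI.induction_on with
  | one => exact ⟨[], by simp, rfl⟩
  | of i a =>
    obtain ⟨a, rfl⟩ := Multiplicative.ofAdd.surjective a
    fin_cases a
    · exact ⟨[], by simp, (map_one _).symm⟩
    · exact ⟨[gen d i], by simp [genSet], mul_one _⟩
  | mul g h hg hh =>
    obtain ⟨L, hL, rfl⟩ := hg
    obtain ⟨M, hM, rfl⟩ := hh
    exact ⟨L ++ M, fun s hs => (List.mem_append.1 hs).elim (hL s) (hM s), List.prod_append⟩

lemma exists_list_genSet_length_eq_wl {d : ℕ} (g : FP d) :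
    ∃ L : List (FP d), (∀ s ∈ L, s ∈ genSet d) ∧ L.length = wl d g ∧ L.prod = g := by
  obtain ⟨L, hL, hprod⟩ := exists_list_genSet_prod_eq g
  exact Nat.sInf_mem (s := {n | ∃ L : List (FP d), (∀ s ∈ L, s ∈ genSet d) ∧ L.length = n ∧
    L.prod = g}) ⟨L.length, L, hL, rfl, hprod⟩

lemma wl_prod_le_length {d : ℕ} {L : List (FP d)} (hL : ∀ s ∈ L, s ∈ genSet d) :
    wl d L.prod ≤ L.length :=
  Nat.sInf_le ⟨L, hL, rfl, rfl⟩

lemma wl_one (d : ℕ) : wl d 1 = 0 :=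
  Nat.le_zero.1 (wl_prod_le_length (L := []) (by simp))

lemma mul_self_of_mem_genSet {d : ℕ} {s : FP d} (hs : s ∈ genSet d) : s * s = 1 := by
  obtain ⟨i, rfl⟩ := hs
  rw [gen, ← map_mul, ← ofAdd_add, show (1 + 1 : ZMod 2) = 0 from rfl, ofAdd_zero, map_one]

lemma wl_mul_le {d : ℕ} (g : FP d) {s : FP d} (hs : s ∈ genSet d) :
    wl d (g * s) ≤ wl d g + 1 := by
  obtain ⟨L, hL, hlen, rfl⟩ := exists_list_genSet_length_eq_wl g
  have hLs : ∀ x ∈ L ++ [s], x ∈ genSet d := fun x hx =>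
    (List.mem_append.1 hx).elim (hL x) fun h => List.mem_singleton.1 h ▸ hs
  simpa [hlen] using wl_prod_le_length hLs

lemma abs_wl_mul_sub_le {d : ℕ} (g : FP d) {s : FP d} (hs : s ∈ genSet d) :
    |(wl d (g * s) : ℝ) - wl d g| ≤ 1 := by
  have h₁ : wl d (g * s) ≤ wl d g + 1 := wl_mul_le g hs
  have h₂ : wl d g ≤ wl d (g * s) + 1 := by
    simpa [mul_assoc, mul_self_of_mem_genSet hs] using wl_mul_le (g * s) hs
  rw [abs_le]
  constructor <;> linarith [(Nat.cast_le (α := ℝ)).2 h₁, (Nat.cast_le (α := ℝ)).2 h₂,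
    Nat.cast_succ (R := ℝ) (wl d g), Nat.cast_succ (R := ℝ) (wl d (g * s))]

lemma abs_sub_le_of_abs_succ_sub_le {f : ℕ → ℝ} (hf : ∀ n, |f (n + 1) - f n| ≤ 1) {a b : ℕ}
    (hba : b ≤ a) : |f a - f b| ≤ a - b := by
  have h := dist_le_Ico_sum_of_dist_le (f := f) (d := fun _ => 1) hba
    fun {k} _ _ => by rw [Real.dist_eq, abs_sub_comm]; exact hf k
  rwa [Finset.sum_const, Nat.card_Ico, nsmul_one, Nat.cast_sub hba, Real.dist_eq,
    abs_sub_comm] at h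

lemma abs_div_sub_div_floor_le {f : ℕ → ℝ} (hf : ∀ n, |f (n + 1) - f n| ≤ 1) (hf0 : f 0 = 0)
    {u v t : ℝ} (hu : 0 < u) (huv : u ≤ v) (ht0 : 0 ≤ t) (ht1 : t ≤ 1) :
    |f ⌊v * t⌋₊ / v - f ⌊u * t⌋₊ / u| ≤ (2 * (v - u) + 1) / v := by
  set A := ⌊v * t⌋₊
  set B := ⌊u * t⌋₊
  have hv : 0 < v := hu.trans_le huv
  have hBA : B ≤ A := Nat.floor_mono (mul_le_mul_of_nonneg_right huv ht0)
  have hA : (A : ℝ) ≤ v * t := Nat.floor_le (by positivity)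
  have hB : (B : ℝ) ≤ u * t := Nat.floor_le (by positivity)
  have hB' : u * t < B + 1 := Nat.lt_floor_add_one _
  have hstep : |f A - f B| ≤ v - u + 1 := by
    nlinarith [abs_sub_le_of_abs_succ_sub_le hf hBA]
  have hsize : |f B| ≤ u := by
    have := abs_sub_le_of_abs_succ_sub_le hf (Nat.zero_le B)
    rw [hf0, sub_zero, Nat.cast_zero, sub_zero] at this
    nlinarith
  calc |f A / v - f B / u| = |(f A - f B) * u - f B * (v - u)| / (u * v) := by
        rw [← abs_of_pos (by positivity : 0 < u * v), ← abs_div]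
        congr 1
        field_simp
        ring
    _ ≤ ((v - u + 1) * u + u * (v - u)) / (u * v) := by
        gcongr
        refine (abs_sub _ _).trans ?_
        rw [abs_mul, abs_mul, abs_of_pos hu, abs_of_nonneg (sub_nonneg.2 huv)]
        gcongr
    _ = (2 * (v - u) + 1) / v := by
        field_simp
        ring

lemma tendsto_two_mul_sub_add_one_div_of_div {u : ℕ → ℝ}
    (h : Tendsto (fun n : ℕ => u n / n) atTop (𝓝 1)) :
    Tendsto (fun n : ℕ => (2 * ((n : ℝ) - u n) + 1) / n) atTop (𝓝 0) := by
  have hlim := (((tendsto_const_nhds (x := (1 : ℝ))).sub h).const_mul 2).add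
    tendsto_one_div_atTop_nhds_zero_nat
  rw [sub_self, mul_zero, zero_add] at hlim
  refine hlim.congr' ?_
  filter_upwards [eventually_gt_atTop 0] with n hn
  field_simp

/-- The index `m` with `s m ≤ n < s (m + 1)`, when `s` is strictly increasing and `s 0 ≤ n`. -/
def lastIndexLE (s : ℕ → ℕ) (n : ℕ) : ℕ := Nat.findGreatest (fun k => s k ≤ n) n

section lastIndexLE

variable {s : ℕ → ℕ}

lemma apply_lastIndexLE_le {n : ℕ} (hn : s 0 ≤ n) : s (lastIndexLE s n) ≤ n :=
  Nat.findGreatest_spec (P := fun k => s k ≤ n) (Nat.zero_le n) hn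

lemma lt_apply_lastIndexLE_succ (hs : StrictMono s) (n : ℕ) : n < s (lastIndexLE s n + 1) := by
  by_contra! h
  exact Nat.findGreatest_is_greatest (lt_add_one _) (hs.le_apply.trans h) h

lemma tendsto_lastIndexLE (hs : StrictMono s) : Tendsto (lastIndexLE s) atTop atTop :=
  tendsto_atTop_atTop.2 fun M => ⟨s M, fun _ hn => Nat.le_findGreatest (hs.le_apply.trans hn) hn⟩

lemma tendsto_apply_lastIndexLE_div (hs : StrictMono s)
    (hratio : Tendsto (fun m => (s (m + 1) : ℝ) / s m) atTop (𝓝 1)) :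
    Tendsto (fun n : ℕ => (s (lastIndexLE s n) : ℝ) / n) atTop (𝓝 1) := by
  have hlower : Tendsto (fun n => (s (lastIndexLE s n) : ℝ) / s (lastIndexLE s n + 1))
      atTop (𝓝 1) := by
    simpa [Function.comp_def, inv_div] using
      (hratio.inv₀ one_ne_zero).comp (tendsto_lastIndexLE hs)
  refine tendsto_of_tendsto_of_tendsto_of_le_of_le' hlower tendsto_const_nhds ?_ ?_
  · filter_upwards [eventually_gt_atTop 0] with n hn
    exact div_le_div_of_nonneg_left (Nat.cast_nonneg _) (by positivity)
      (by exact_mod_cast (lt_apply_lastIndexLE_succ hs n).le)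
  · filter_upwards [eventually_ge_atTop (s 0)] with n hn
    exact div_le_one_of_le₀ (by exact_mod_cast apply_lastIndexLE_le hn) (Nat.cast_nonneg _)

end lastIndexLE

section walk

variable {d : ℕ} {Ω : Type*} {X Y : ℕ → Ω → FP d}

lemma walk_zero (hY : ∀ n ω, Y n ω = ((List.range n).map (fun k => X (k + 1) ω)).prod)
    (ω : Ω) : Y 0 ω = 1 := by
  simp [hY]

lemma walk_succ (hY : ∀ n ω, Y n ω = ((List.range n).map (fun k => X (k + 1) ω)).prod)
    (n : ℕ) (ω : Ω) : Y (n + 1) ω = Y n ω * X (n + 1) ω := by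
  simp [hY, List.range_succ]

lemma abs_wl_walk_succ_sub_le (hX : ∀ i ω, X i ω ∈ genSet d)
    (hY : ∀ n ω, Y n ω = ((List.range n).map (fun k => X (k + 1) ω)).prod) (ω : Ω) (n : ℕ) :
    |(wl d (Y (n + 1) ω) : ℝ) - wl d (Y n ω)| ≤ 1 := by
  rw [walk_succ hY]
  exact abs_wl_mul_sub_le _ (hX _ ω)

lemma setOf_abs_wl_walk_div_sub_lt_subset (hX : ∀ i ω, X i ω ∈ genSet d)
    (hY : ∀ n ω, Y n ω = ((List.range n).map (fun k => X (k + 1) ω)).prod)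
    {j : ℕ} {t : Fin j → ℝ} (ht0 : ∀ i, 0 ≤ t i) (ht1 : ∀ i, t i ≤ 1) (x : Fin j → ℝ)
    {ρ δ : ℝ} {u v : ℕ} (hu : 0 < u) (huv : u ≤ v)
    (hgap : (2 * ((v : ℝ) - u) + 1) / v ≤ δ - ρ) :
    {ω | ∀ i, |(wl d (Y ⌊(u : ℝ) * t i⌋₊ ω) : ℝ) / u - x i| < ρ} ⊆
      {ω | ∀ i, |(wl d (Y ⌊(v : ℝ) * t i⌋₊ ω) : ℝ) / v - x i| < δ} := by
  intro ω hω i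
  have hclose := abs_div_sub_div_floor_le (f := fun k => (wl d (Y k ω) : ℝ))
    (abs_wl_walk_succ_sub_le hX hY ω) (by simp [walk_zero hY, wl_one])
    (Nat.cast_pos.2 hu) (Nat.cast_le.2 huv) (ht0 i) (ht1 i)
  have htri := abs_sub_le ((wl d (Y ⌊(v : ℝ) * t i⌋₊ ω) : ℝ) / v)
    ((wl d (Y ⌊(u : ℝ) * t i⌋₊ ω) : ℝ) / u) (x i)
  linarith [hω i]

end walk

lemma coe_mul_le_mul_log_of_ofReal_exp_le {a : ℝ≥0∞} {c r : ℝ} (hc : 0 ≤ c)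
    (h : ENNReal.ofReal (Real.exp r) ≤ a) : ((c * r : ℝ) : EReal) ≤ c * ENNReal.log a := by
  have hlog := ENNReal.log_monotone h
  rw [ENNReal.log_ofReal_of_pos (Real.exp_pos r), Real.log_exp] at hlog
  rw [EReal.coe_mul]
  exact mul_le_mul_of_nonneg_left hlog (EReal.coe_nonneg.2 hc)

theorem liminf_ball_lower_bound_general {d : ℕ} {Ω : Type*}
    [MeasurableSpace Ω] (P : Measure Ω)
    (X : ℕ → Ω → FP d) (hX : ∀ i ω, X i ω ∈ genSet d)
    (Y : ℕ → Ω → FP d)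
    (hY : ∀ n ω, Y n ω = ((List.range n).map (fun k => X (k + 1) ω)).prod)
    {j : ℕ} (t : Fin j → ℝ) (ht0 : ∀ i, 0 < t i) (ht1 : ∀ i, t i ≤ 1)
    (ρ : ℝ) (γ : ℝ) (x : Fin j → ℝ)
    (nm : ℕ → ℕ) (hmono : StrictMono nm)
    (hratio : Filter.Tendsto (fun m => (nm (m + 1) : ℝ) / (nm m : ℝ))
      Filter.atTop (nhds 1))
    (hlb : ∀ m : ℕ, 1 ≤ m →
      ENNReal.ofReal (Real.exp ((nm m : ℝ) * γ)) ≤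
        P {ω | ∀ i, |(wl d (Y ⌊(nm m : ℝ) * t i⌋₊ ω) : ℝ) / (nm m) - x i| < ρ}) :
    ∀ δ : ℝ, ρ < δ →
      (γ : EReal) ≤
        Filter.liminf
          (fun n : ℕ => (((n : ℝ)⁻¹ : ℝ) : EReal) *
            ENNReal.log
              (P {ω | ∀ i, |(wl d (Y ⌊(n : ℝ) * t i⌋₊ ω) : ℝ) / n - x i| < δ}))
          Filter.atTop := by
  intro δ hδ
  set m := lastIndexLE nm
  have hconv : Tendsto (fun n : ℕ => (nm (m n) : ℝ) / n) atTop (𝓝 1) :=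
    tendsto_apply_lastIndexLE_div hmono hratio
  have hgap := tendsto_two_mul_sub_add_one_div_of_div hconv
  have hbound : ∀ᶠ n : ℕ in atTop, (((nm (m n) : ℝ) / n * γ : ℝ) : EReal) ≤
      (((n : ℝ)⁻¹ : ℝ) : EReal) *
        ENNReal.log (P {ω | ∀ i, |(wl d (Y ⌊(n : ℝ) * t i⌋₊ ω) : ℝ) / n - x i| < δ}) := by
    filter_upwards [(tendsto_lastIndexLE hmono).eventually_ge_atTop 1,
      eventually_ge_atTop (nm 0), hgap.eventually (ge_mem_nhds (sub_pos.2 hδ))]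
      with n hm hn hgapn
    have hsub := setOf_abs_wl_walk_div_sub_lt_subset hX hY (fun i => (ht0 i).le) ht1 x
      (hm.trans hmono.le_apply) (apply_lastIndexLE_le hn) hgapn
    rw [div_mul_eq_mul_div, div_eq_inv_mul]
    exact coe_mul_le_mul_log_of_ofReal_exp_le (by positivity)
      ((hlb _ hm).trans (measure_mono hsub))
  calc (γ : EReal) = liminf (fun n : ℕ => (((nm (m n) : ℝ) / n * γ : ℝ) : EReal)) atTop := by
        refine (Tendsto.liminf_eq ?_).symm
        have h := hconv.mul_const γ
        rw [one_mul] at h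
        exact (continuous_coe_real_ereal.tendsto γ).comp h
    _ ≤ _ := liminf_le_liminf hbound

/-- If `μ_{n_m}^J(B(x,ρ)) ≥ exp(n_m γ)` along a non-lacunary strictly increasing
sequence `(n_m)`, then `liminf (1/n) log μ_n^J(B(x,δ)) ≥ γ` for every `δ > ρ`. -/
theorem liminf_ball_lower_bound {d : ℕ} (hd : 3 ≤ d) {Ω : Type*}
    [MeasurableSpace Ω] (P : Measure Ω) [IsProbabilityMeasure P]
    (X : ℕ → Ω → FP d) (hX : ∀ i ω, X i ω ∈ genSet d)
    (Y : ℕ → Ω → FP d)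
    (hY : ∀ n ω, Y n ω = ((List.range n).map (fun k => X (k + 1) ω)).prod)
    {j : ℕ} (t : Fin j → ℝ) (ht0 : ∀ i, 0 < t i) (ht1 : ∀ i, t i ≤ 1)
    (htmono : StrictMono t)
    (ρ : ℝ) (hρ : 0 < ρ) (γ : ℝ) (x : Fin j → ℝ)
    (nm : ℕ → ℕ) (hnm0 : ∀ m, 0 < nm m) (hmono : StrictMono nm)
    (hratio : Filter.Tendsto (fun m => (nm (m + 1) : ℝ) / (nm m : ℝ))
      Filter.atTop (nhds 1))
    (hlb : ∀ m : ℕ, 1 ≤ m →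
      ENNReal.ofReal (Real.exp ((nm m : ℝ) * γ)) ≤
        P {ω | ∀ i, |(wl d (Y ⌊(nm m : ℝ) * t i⌋₊ ω) : ℝ) / (nm m) - x i| < ρ}) :
    ∀ δ : ℝ, ρ < δ →
      (γ : EReal) ≤
        Filter.liminf
          (fun n : ℕ => (((n : ℝ)⁻¹ : ℝ) : EReal) *
            ENNReal.log
              (P {ω | ∀ i, |(wl d (Y ⌊(n : ℝ) * t i⌋₊ ω) : ℝ) / n - x i| < δ}))
          Filter.atTop :=
  liminf_ball_lower_bound_general P X hX Y hY t ht0 ht1 ρ γ x nm hmono hratio hlb
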